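/- arXiv:1404.1826 — 4 statements merged into one kernel-verified Lean document; each statement's English description precedes it below -/
import Mathlib

section
/- Let h be analytic and starlike (univalent with h(0)=0 and h(Δ) starlike with respect to 0) on the unit disc Δ, and let g be analytic on Δ with g(0) = 0 and |g'(z)| < |h'(z)| for all z ∈ Δ. Then |g(z)| < |h(z)| for all z ∈ Δ \ {0}. -/
/-!
The inequality `‖g'‖ < ‖h'‖` forces `h' ≠ 0`, so the inverse `ψ` of `h` on `h(Δ)` is holomorphic
and `g ∘ ψ` has derivative `(g' / h') ∘ ψ`, of modulus `< 1`. Starlikeness puts the segment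
`[0, h z]` inside `h(Δ)`; on this compact segment the modulus of the derivative attains a maximum
`ρ < 1`, so the mean value inequality gives `‖g z‖ = ‖(g ∘ ψ)(h z) - (g ∘ ψ)(0)‖ ≤ ρ ‖h z‖ < ‖h z‖`.
-/

open Metric Set Topology Function

theorem Set.InjOn.hasStrictDerivAt_invFunOn {𝕜 : Type*} [NontriviallyNormedField 𝕜]
    [CompleteSpace 𝕜] {h : 𝕜 → 𝕜} {U : Set 𝕜} {x h' : 𝕜} (hinj : InjOn h U) (hU : U ∈ 𝓝 x)
    (hh : HasStrictDerivAt h h' x) (hh' : h' ≠ 0) :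
    HasStrictDerivAt (invFunOn h U) h'⁻¹ (h x) := by
  have hF := hh.hasStrictFDerivAt_equiv hh'
  refine (hh.to_localInverse hh').congr_of_eventuallyEq ?_
  filter_upwards [hF.eventually_right_inverse, hF.localInverse_tendsto hU] with y hy hyU
  have hyh : y ∈ h '' U := ⟨_, hyU, hy⟩
  exact hinj hyU (invFunOn_mem hyh) (hy.trans (invFunOn_eq hyh).symm)

section Holomorphic

variable {h g : ℂ → ℂ} {U : Set ℂ} {y : ℂ}

theorem hasStrictDerivAt_invFunOn_of_mem_image (hU : IsOpen U) (hd : DifferentiableOn ℂ h U)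
    (hinj : InjOn h U) (hne : ∀ x ∈ U, deriv h x ≠ 0) (hy : y ∈ h '' U) :
    HasStrictDerivAt (invFunOn h U) (deriv h (invFunOn h U y))⁻¹ y := by
  have hxU : invFunOn h U y ∈ U := invFunOn_mem hy
  have hx := hinj.hasStrictDerivAt_invFunOn (hU.mem_nhds hxU)
    (hd.analyticAt (hU.mem_nhds hxU)).hasStrictDerivAt (hne _ hxU)
  rwa [invFunOn_eq hy] at hx

theorem hasDerivAt_comp_invFunOn (hU : IsOpen U) (hd : DifferentiableOn ℂ h U) (hinj : InjOn h U)
    (hne : ∀ x ∈ U, deriv h x ≠ 0) (gd : DifferentiableOn ℂ g U) (hy : y ∈ h '' U) :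
    HasDerivAt (g ∘ invFunOn h U)
      (deriv g (invFunOn h U y) / deriv h (invFunOn h U y)) y := by
  rw [div_eq_mul_inv]
  exact (gd.differentiableAt (hU.mem_nhds (invFunOn_mem hy))).hasDerivAt.comp y
    (hasStrictDerivAt_invFunOn_of_mem_image hU hd hinj hne hy).hasDerivAt

theorem continuousOn_deriv_div_comp_invFunOn (hU : IsOpen U) (hd : DifferentiableOn ℂ h U)
    (hinj : InjOn h U) (hne : ∀ x ∈ U, deriv h x ≠ 0) (gd : DifferentiableOn ℂ g U) :
    ContinuousOn (fun y => deriv g (invFunOn h U y) / deriv h (invFunOn h U y)) (h '' U) := by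
  have hψ : ContinuousOn (invFunOn h U) (h '' U) := fun y hy =>
    (hasStrictDerivAt_invFunOn_of_mem_image hU hd hinj hne hy).hasDerivAt.continuousAt
      |>.continuousWithinAt
  have hmaps : MapsTo (invFunOn h U) (h '' U) U := fun _ hy => invFunOn_mem hy
  exact ((gd.analyticOnNhd hU).deriv.continuousOn.comp hψ hmaps).div
    ((hd.analyticOnNhd hU).deriv.continuousOn.comp hψ hmaps) fun y hy => hne _ (hmaps hy)

end Holomorphic

theorem isCompact_segment {E : Type*} [NormedAddCommGroup E] [NormedSpace ℝ E] (x y : E) :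
    IsCompact (segment ℝ x y) :=
  convexHull_pair (𝕜 := ℝ) x y ▸ (toFinite _).isCompact_convexHull (𝕜 := ℝ)

theorem Convex.norm_image_sub_lt_of_norm_hasDerivWithin_lt {𝕜 G : Type*} [RCLike 𝕜]
    [NormedAddCommGroup G] [NormedSpace 𝕜 G] {f f' : 𝕜 → G} {s : Set 𝕜} {x y : 𝕜} {C : ℝ}
    (hs : Convex ℝ s) (hsc : IsCompact s) (hf : ∀ x ∈ s, HasDerivWithinAt f (f' x) s x)
    (hf' : ContinuousOn f' s) (hlt : ∀ x ∈ s, ‖f' x‖ < C) (xs : x ∈ s) (ys : y ∈ s)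
    (hxy : x ≠ y) : ‖f y - f x‖ < C * ‖y - x‖ := by
  obtain ⟨z, hz, hmax⟩ := hsc.exists_isMaxOn ⟨x, xs⟩ hf'.norm
  calc ‖f y - f x‖ ≤ ‖f' z‖ * ‖y - x‖ :=
        hs.norm_image_sub_le_of_norm_hasDerivWithin_le hf (fun w hw => hmax hw) xs ys
    _ < C * ‖y - x‖ := mul_lt_mul_of_pos_right (hlt z hz) (norm_pos_iff.2 (sub_ne_zero.2 hxy.symm))

theorem stmt2 (h g : ℂ → ℂ)
    (hd : DifferentiableOn ℂ h (Metric.ball (0:ℂ) 1))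
    (gd : DifferentiableOn ℂ g (Metric.ball (0:ℂ) 1))
    (h0 : h 0 = 0) (g0 : g 0 = 0)
    (hinj : Set.InjOn h (Metric.ball (0:ℂ) 1))
    (hstar : ∀ w ∈ h '' (Metric.ball (0:ℂ) 1), segment ℝ 0 w ⊆ h '' (Metric.ball (0:ℂ) 1))
    (hsp : ∀ z ∈ Metric.ball (0:ℂ) 1, ‖deriv g z‖ < ‖deriv h z‖) :
    ∀ z ∈ Metric.ball (0:ℂ) 1, z ≠ 0 → ‖g z‖ < ‖h z‖ := by
  intro z hz hz0
  set B := ball (0:ℂ) 1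
  have hB0 : (0:ℂ) ∈ B := mem_ball_self one_pos
  have hne : ∀ x ∈ B, deriv h x ≠ 0 := fun x hx e => by
    simpa [e] using (norm_nonneg _).trans_lt (hsp x hx)
  have hhz : 0 ≠ h z := fun e => hz0 (hinj hz hB0 (e.symm.trans h0.symm))
  have hseg : segment ℝ 0 (h z) ⊆ h '' B := hstar _ (mem_image_of_mem h hz)
  have hlt : ∀ y ∈ h '' B,
      ‖deriv g (invFunOn h B y) / deriv h (invFunOn h B y)‖ < 1 := fun y hy => by
    rw [norm_div, div_lt_one (norm_pos_iff.2 (hne _ (invFunOn_mem hy)))]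
    exact hsp _ (invFunOn_mem hy)
  have hmean_value := (convex_segment 0 (h z)).norm_image_sub_lt_of_norm_hasDerivWithin_lt
    (isCompact_segment 0 (h z))
    (fun y hy => (hasDerivAt_comp_invFunOn isOpen_ball hd hinj hne gd (hseg hy)).hasDerivWithinAt)
    ((continuousOn_deriv_div_comp_invFunOn isOpen_ball hd hinj hne gd).mono hseg)
    (fun y hy => hlt y (hseg hy)) (left_mem_segment ℝ _ _) (right_mem_segment ℝ _ _) hhz
  have hψ0 : invFunOn h B 0 = 0 := by simpa [h0] using hinj.leftInvOn_invFunOn hB0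
  rwa [comp_apply, comp_apply, hinj.leftInvOn_invFunOn hz, hψ0, g0, sub_zero, sub_zero, one_mul]
    at hmean_value
end

section
/- Let f = h + conj(g) ∈ Ľ_H^α. Then for all z ∈ Δ with |z| < α, |g'(z)| ≥ (α - |z|)(1 - |z|) / ((1 - α|z|)(1 + |z|)³). -/
/-!
The dilatation `ω = g'/h'` maps the disc into itself with `|ω(0)| = α`, so Schwarz–Pick gives
`|ω(z)| ≥ (α - |z|)/(1 - α|z|)`. For starlike `h` the maps `h⁻¹ ∘ (t • h)`, `0 ≤ t ≤ 1`, are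
Schwarz functions; differentiating in `t` at `t = 1` shows that `p(z) = z h'(z)/h(z)` has
nonnegative real part. Schwarz's lemma for the Cayley transform of `p` gives
`Re p ≥ (1 - |z|)/(1 + |z|)`, integrating this along radii gives `|h(z)| ≥ |z|/(1 + |z|)²`,
and `h' = p h / z` yields `|h'(z)| ≥ (1 - |z|)/(1 + |z|)³`. Multiplying the two bounds
gives the result.
-/

open Metric Set Filter Topology ComplexConjugate

theorem norm_one_sub_conj_mul_sq_sub_norm_sub_sq (a w : ℂ) :
    ‖1 - conj a * w‖ ^ 2 - ‖a - w‖ ^ 2 = (1 - ‖a‖ ^ 2) * (1 - ‖w‖ ^ 2) := by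
  simp only [Complex.sq_norm]
  apply Complex.ofReal_injective
  push_cast
  simp only [← Complex.mul_conj, map_sub, map_mul, map_one, Complex.conj_conj]
  ring

theorem norm_sub_lt_norm_one_sub_conj_mul {a w : ℂ} (ha : ‖a‖ < 1) (hw : ‖w‖ < 1) :
    ‖a - w‖ < ‖1 - conj a * w‖ := by
  have hid := norm_one_sub_conj_mul_sq_sub_norm_sub_sq a w
  have hpos : 0 < (1 - ‖a‖ ^ 2) * (1 - ‖w‖ ^ 2) := by
    apply mul_pos <;> nlinarith [norm_nonneg a, norm_nonneg w]
  exact lt_of_pow_lt_pow_left₀ 2 (norm_nonneg _) (by linarith)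

/-- The pseudo-hyperbolic distance of `a` and `w` dominates that of `‖a‖` and `‖w‖`. -/
theorem norm_sub_norm_mul_le_norm_sub_mul {a w : ℂ} (ha : ‖a‖ ≤ 1) (hw : ‖w‖ ≤ 1) :
    (‖a‖ - ‖w‖) * ‖1 - conj a * w‖ ≤ ‖a - w‖ * (1 - ‖a‖ * ‖w‖) := by
  have hY : 0 ≤ 1 - ‖a‖ * ‖w‖ := by nlinarith [norm_nonneg a, norm_nonneg w]
  rcases le_or_gt ‖a‖ ‖w‖ with haw | haw
  · nlinarith [norm_nonneg (1 - conj a * w), norm_nonneg (a - w)]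
  have hc : 0 ≤ (1 - ‖a‖ ^ 2) * (1 - ‖w‖ ^ 2) := by
    apply mul_nonneg <;> nlinarith [norm_nonneg a, norm_nonneg w]
  have hA : ‖a‖ - ‖w‖ ≤ ‖a - w‖ := norm_sub_norm_le a w
  have hB := norm_one_sub_conj_mul_sq_sub_norm_sub_sq a w
  rw [← pow_le_pow_iff_left₀ (by positivity) (by positivity) two_ne_zero]
  nlinarith [mul_le_mul_of_nonneg_right (pow_le_pow_left₀ (by linarith) hA 2) hc]

theorem schwarz_pick_lower_bound {ω : ℂ → ℂ} (hd : DifferentiableOn ℂ ω (ball 0 1))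
    (hmaps : MapsTo ω (ball 0 1) (ball 0 1)) {z : ℂ} (hz : z ∈ ball (0 : ℂ) 1) :
    ‖ω 0‖ - ‖z‖ ≤ ‖ω z‖ * (1 - ‖ω 0‖ * ‖z‖) := by
  set a := ω 0
  have hω : ∀ ζ ∈ ball (0 : ℂ) 1, ‖ω ζ‖ < 1 := fun ζ hζ => mem_ball_zero_iff.1 (hmaps hζ)
  have ha : ‖a‖ < 1 := hω 0 (mem_ball_self one_pos)
  have hlt : ∀ ζ ∈ ball (0 : ℂ) 1, ‖a - ω ζ‖ < ‖1 - conj a * ω ζ‖ := fun ζ hζ =>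
    norm_sub_lt_norm_one_sub_conj_mul ha (hω ζ hζ)
  have hden : ∀ ζ ∈ ball (0 : ℂ) 1, 0 < ‖1 - conj a * ω ζ‖ := fun ζ hζ =>
    (norm_nonneg _).trans_lt (hlt ζ hζ)
  -- the disc automorphism exchanging `a` and `0`, composed with `ω`, fixes `0`
  set φ : ℂ → ℂ := fun ζ => (a - ω ζ) / (1 - conj a * ω ζ)
  have hφd : DifferentiableOn ℂ φ (ball 0 1) :=
    ((differentiableOn_const a).sub hd).div
      ((differentiableOn_const 1).sub ((differentiableOn_const _).mul hd))
      fun ζ hζ => norm_pos_iff.1 (hden ζ hζ)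
  have hφmaps : MapsTo φ (ball 0 1) (closedBall 0 1) := fun ζ hζ => by
    rw [mem_closedBall_zero_iff, norm_div, div_le_one (hden ζ hζ)]
    exact (hlt ζ hζ).le
  have hschwarz : ‖φ z‖ ≤ ‖z‖ :=
    Complex.norm_le_norm_of_mapsTo_ball hφd hφmaps (by simp [φ, a]) (mem_ball_zero_iff.1 hz)
  rw [norm_div, div_le_iff₀ (hden z hz)] at hschwarz
  have hpseudo := norm_sub_norm_mul_le_norm_sub_mul ha.le (hω z hz).le
  have hmain : ‖a‖ - ‖ω z‖ ≤ ‖z‖ * (1 - ‖a‖ * ‖ω z‖) := by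
    refine le_of_mul_le_mul_right ?_ (hden z hz)
    calc (‖a‖ - ‖ω z‖) * ‖1 - conj a * ω z‖ ≤ ‖a - ω z‖ * (1 - ‖a‖ * ‖ω z‖) := hpseudo
      _ ≤ ‖z‖ * ‖1 - conj a * ω z‖ * (1 - ‖a‖ * ‖ω z‖) := by
        gcongr
        nlinarith [norm_nonneg a, norm_nonneg (ω z), hω z hz]
      _ = _ := by ring
  linarith

theorem caratheodory_re_lower_bound {p : ℂ → ℂ} (hd : DifferentiableOn ℂ p (ball 0 1))
    (h0 : p 0 = 1) (hre : ∀ z ∈ ball (0 : ℂ) 1, 0 ≤ (p z).re) {z : ℂ} (hz : z ∈ ball (0 : ℂ) 1) :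
    1 - ‖z‖ ≤ (1 + ‖z‖) * (p z).re := by
  have hpos : ∀ ζ ∈ ball (0 : ℂ) 1, 0 < ‖p ζ + 1‖ := fun ζ hζ =>
    (hre ζ hζ).trans_lt ((by simp : (p ζ).re < (p ζ + 1).re).trans_le (Complex.re_le_norm _))
  -- the Cayley transform of `p` is a self-map of the disc fixing `0`
  set q : ℂ → ℂ := fun ζ => (p ζ - 1) / (p ζ + 1)
  have hqd : DifferentiableOn ℂ q (ball 0 1) :=
    (hd.sub (differentiableOn_const 1)).div (hd.add (differentiableOn_const 1))
      fun ζ hζ => norm_pos_iff.1 (hpos ζ hζ)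
  have hqmaps : MapsTo q (ball 0 1) (closedBall 0 1) := fun ζ hζ => by
    rw [mem_closedBall_zero_iff, norm_div, div_le_one (hpos ζ hζ),
      ← pow_le_pow_iff_left₀ (norm_nonneg _) (norm_nonneg _) two_ne_zero]
    simp only [Complex.sq_norm, Complex.normSq_apply, Complex.sub_re, Complex.add_re,
      Complex.sub_im, Complex.add_im, Complex.one_re, Complex.one_im]
    nlinarith [hre ζ hζ]
  have hschwarz : ‖q z‖ ≤ ‖z‖ :=
    Complex.norm_le_norm_of_mapsTo_ball hqd hqmaps (by simp [q, h0]) (mem_ball_zero_iff.1 hz)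
  rw [norm_div, div_le_iff₀ (hpos z hz)] at hschwarz
  have hsq : ‖p z - 1‖ ^ 2 ≤ ‖z‖ ^ 2 * ‖p z + 1‖ ^ 2 := by
    rw [← mul_pow]; exact pow_le_pow_left₀ (norm_nonneg _) hschwarz 2
  rw [Complex.sq_norm (p z - 1), Complex.sq_norm (p z + 1)] at hsq
  simp only [Complex.normSq_apply, Complex.sub_re, Complex.add_re, Complex.sub_im,
    Complex.add_im, Complex.one_re, Complex.one_im] at hsq
  set r := ‖z‖
  set x := (p z).re
  have hr1 : r < 1 := mem_ball_zero_iff.1 hz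
  have hx : (1 - x) ^ 2 ≤ (r * (x + 1)) ^ 2 := by
    nlinarith [mul_le_mul_of_nonneg_right (by nlinarith [norm_nonneg z] : r ^ 2 ≤ 1)
      (sq_nonneg (p z).im)]
  have := abs_le_of_sq_le_sq' hx (mul_nonneg (norm_nonneg z) (by linarith [hre z hz]))
  linarith [this.2]

theorem HasDerivAt.log_norm {f : ℝ → ℂ} {f' : ℂ} {t : ℝ} (hf : HasDerivAt f f' t)
    (hf0 : f t ≠ 0) : HasDerivAt (fun s => Real.log ‖f s‖) (f' / f t).re t := by
  have hsq := (hf.norm_sq.log (by positivity)).div_const 2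
  have hfun : (fun s => Real.log ‖f s‖) = fun s => Real.log (‖f s‖ ^ 2) / 2 := by
    funext s
    rw [Real.log_pow]
    ring
  rw [hfun]
  refine hsq.congr_deriv ?_
  rw [Complex.inner, Complex.div_re, Complex.sq_norm, Complex.mul_re, Complex.conj_re,
    Complex.conj_im]
  field_simp
  ring

theorem HasDerivAt.nonneg_of_isLocalMaxOn_Iic {f : ℝ → ℝ} {f' a : ℝ} (hf : HasDerivAt f f' a)
    (hmax : IsLocalMaxOn f (Iic a) a) : 0 ≤ f' := by
  have hcone : (-1 : ℝ) ∈ posTangentConeAt (Iic a) a :=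
    mem_posTangentConeAt_of_segment_subset
      ((convex_Iic a).segment_subset (mem_Iic.2 le_rfl) (by simp))
  have := hmax.hasFDerivWithinAt_nonpos hf.hasFDerivAt.hasFDerivWithinAt hcone
  simpa using this

/-- For `h w = w * k w`, the hypothesis is the Carathéodory bound on `w h'/h = 1 + w k'/k` and
the conclusion is the growth bound `|h(z)| ≥ |z|/(1 + |z|)²`. -/
theorem one_le_sq_mul_norm_of_re_lower_bound {k : ℂ → ℂ} (hd : DifferentiableOn ℂ k (ball 0 1))
    (hne : ∀ w ∈ ball (0 : ℂ) 1, k w ≠ 0) (h0 : k 0 = 1)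
    (hre : ∀ w ∈ ball (0 : ℂ) 1, 1 - ‖w‖ ≤ (1 + ‖w‖) * (1 + w * deriv k w / k w).re)
    {z : ℂ} (hz : z ∈ ball (0 : ℂ) 1) : 1 ≤ (1 + ‖z‖) ^ 2 * ‖k z‖ := by
  set r := ‖z‖
  have hr1 : r < 1 := mem_ball_zero_iff.1 hz
  have hmem : ∀ t ∈ Icc (0 : ℝ) 1, (t : ℂ) * z ∈ ball (0 : ℂ) 1 := fun t ht => by
    rw [mem_ball_zero_iff, norm_mul, Complex.norm_real, Real.norm_of_nonneg ht.1]
    nlinarith [norm_nonneg z, ht.2]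
  set u : ℝ → ℝ := fun t => Real.log ‖k (t * z)‖ + 2 * Real.log (1 + t * r)
  have hu : ∀ t ∈ Icc (0 : ℝ) 1,
      HasDerivAt u ((deriv k (t * z) * z / k (t * z)).re + 2 * (r / (1 + t * r))) t := by
    intro t ht
    have hk : HasDerivAt k (deriv k (t * z)) (t * z) :=
      (hd.differentiableAt (isOpen_ball.mem_nhds (hmem t ht))).hasDerivAt
    have hkz : HasDerivAt (fun s : ℝ => k (s * z)) (deriv k (t * z) * z) t :=
      (hk.comp (t : ℂ) ((hasDerivAt_id (t : ℂ)).mul_const z)).comp_ofReal.congr_deriv (by simp)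
    have hlin : HasDerivAt (fun s : ℝ => 1 + s * r) r t := by
      simpa using ((hasDerivAt_id t).mul_const r).const_add 1
    exact (hkz.log_norm (hne _ (hmem t ht))).add
      ((hlin.log (by nlinarith [norm_nonneg z, ht.1])).const_mul 2)
  have hderiv : ∀ t ∈ Ioo (0 : ℝ) 1,
      0 ≤ (deriv k (t * z) * z / k (t * z)).re + 2 * (r / (1 + t * r)) := by
    intro t ht
    set X := (deriv k (t * z) * z / k (t * z)).re
    have hw := hre _ (hmem t (Ioo_subset_Icc_self ht))
    have hscale : (t : ℂ) * z * deriv k (t * z) / k (t * z)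
        = t * (deriv k (t * z) * z / k (t * z)) := by ring
    rw [norm_mul, Complex.norm_real, Real.norm_of_nonneg ht.1.le, hscale, Complex.add_re,
      Complex.one_re, Complex.re_ofReal_mul] at hw
    have hden : 0 < 1 + t * r := by nlinarith [norm_nonneg z, ht.1]
    have hX : -2 * r ≤ (1 + t * r) * X := by nlinarith [ht.1]
    have hX' : -X ≤ 2 * (r / (1 + t * r)) := by
      rw [mul_div_assoc', le_div_iff₀ hden]
      linarith
    linarith
  have hmono : MonotoneOn u (Icc 0 1) := by
    refine monotoneOn_of_deriv_nonneg (convex_Icc 0 1)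
      (fun t ht => (hu t ht).continuousAt.continuousWithinAt) (fun t ht => ?_) (fun t ht => ?_)
    · rw [interior_Icc] at ht
      exact (hu t (Ioo_subset_Icc_self ht)).differentiableAt.differentiableWithinAt
    · rw [interior_Icc] at ht
      rw [(hu t (Ioo_subset_Icc_self ht)).deriv]
      exact hderiv t ht
  have h01 := hmono (left_mem_Icc.2 zero_le_one) (right_mem_Icc.2 zero_le_one) zero_le_one
  have hkz : 0 < ‖k z‖ := norm_pos_iff.2 (hne z hz)
  simp only [u, Complex.ofReal_zero, zero_mul, h0, norm_one, Real.log_one, Complex.ofReal_one,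
    one_mul, mul_zero, add_zero] at h01
  rw [← Real.log_nonneg_iff (by positivity), Real.log_mul (by positivity) hkz.ne', Real.log_pow]
  push_cast
  linarith

theorem exists_localInverse_of_deriv_ne_zero {h : ℂ → ℂ} {s : Set ℂ} (hs : IsOpen s)
    (hd : DifferentiableOn ℂ h s) {z : ℂ} (hz : z ∈ s) (hne : deriv h z ≠ 0) :
    ∃ L : ℂ → ℂ, L (h z) = z ∧ HasDerivAt L (deriv h z)⁻¹ (h z) ∧
      ∀ᶠ y in 𝓝 (h z), L y ∈ s ∧ h (L y) = y := by
  have hh := (hd.analyticAt (hs.mem_nhds hz)).hasStrictDerivAt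
  have hL := (hh.to_localInverse hne).hasDerivAt
  have hLz : hh.localInverse h _ z hne (h z) = z := hh.eventually_left_inverse hne |>.self_of_nhds
  refine ⟨_, hLz, hL, Eventually.and ?_ (hh.eventually_right_inverse hne)⟩
  exact hL.continuousAt.preimage_mem_nhds (by rw [hLz]; exact hs.mem_nhds hz)

theorem Set.InjOn.differentiableAt_of_apply_eq {h Φ F : ℂ → ℂ} {s : Set ℂ} (hs : IsOpen s)
    (hd : DifferentiableOn ℂ h s) (hinj : InjOn h s) (hΦ : MapsTo Φ s s)
    (hF : ∀ ζ ∈ s, h (Φ ζ) = F ζ) {ζ₀ : ℂ} (hζ₀ : ζ₀ ∈ s) (hFd : DifferentiableAt ℂ F ζ₀)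
    (hne : deriv h (Φ ζ₀) ≠ 0) : DifferentiableAt ℂ Φ ζ₀ := by
  obtain ⟨L, -, hL, hLinv⟩ := exists_localInverse_of_deriv_ne_zero hs hd (hΦ hζ₀) hne
  rw [hF ζ₀ hζ₀] at hL hLinv
  have hΦeq : Φ =ᶠ[𝓝 ζ₀] L ∘ F := by
    filter_upwards [hFd.continuousAt.eventually hLinv, hs.mem_nhds hζ₀] with ζ ⟨hLs, hLF⟩ hζ
    exact hinj (hΦ hζ) hLs (by rw [hF ζ hζ, Function.comp_apply, hLF])
  exact hΦeq.differentiableAt_iff.2 (hL.differentiableAt.comp ζ₀ hFd)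

theorem starlike_norm_le_of_apply_eq_mul {h : ℂ → ℂ} (hd : DifferentiableOn ℂ h (ball 0 1))
    (h0 : h 0 = 0) (hne : ∀ z ∈ ball (0 : ℂ) 1, deriv h z ≠ 0) (hinj : InjOn h (ball 0 1))
    (hstar : ∀ w ∈ h '' ball 0 1, segment ℝ 0 w ⊆ h '' ball 0 1) {t : ℝ} (ht : t ∈ Icc 0 1)
    {z w : ℂ} (hz : z ∈ ball (0 : ℂ) 1) (hw : w ∈ ball (0 : ℂ) 1) (hwz : h w = t * h z) :
    ‖w‖ ≤ ‖z‖ := by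
  have hsolve : ∀ ζ, ∃ v, ζ ∈ ball (0 : ℂ) 1 → v ∈ ball (0 : ℂ) 1 ∧ h v = t * h ζ := by
    intro ζ
    by_cases hζ : ζ ∈ ball (0 : ℂ) 1
    · have hseg : (t : ℂ) * h ζ ∈ segment ℝ 0 (h ζ) :=
        ⟨1 - t, t, by linarith [ht.2], ht.1, by ring, by simp [Complex.real_smul]⟩
      obtain ⟨v, hv, hvζ⟩ := hstar _ (mem_image_of_mem h hζ) hseg
      exact ⟨v, fun _ => ⟨hv, hvζ⟩⟩
    · exact ⟨0, fun h => absurd h hζ⟩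
  -- `Φ = h⁻¹ ∘ (t • h)` is a holomorphic self-map of the disc fixing `0`
  choose Φ hΦ using hsolve
  have hΦs : MapsTo Φ (ball 0 1) (ball 0 1) := fun ζ hζ => (hΦ ζ hζ).1
  have h00 : (0 : ℂ) ∈ ball (0 : ℂ) 1 := mem_ball_self one_pos
  have hΦd : DifferentiableOn ℂ Φ (ball 0 1) := fun ζ hζ =>
    (hinj.differentiableAt_of_apply_eq isOpen_ball hd hΦs (fun ζ hζ => (hΦ ζ hζ).2) hζ
      ((differentiableAt_const _).mul (hd.differentiableAt (isOpen_ball.mem_nhds hζ)))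
      (hne _ (hΦs hζ))).differentiableWithinAt
  have hΦ0 : Φ 0 = 0 := hinj (hΦs h00) h00 (by rw [(hΦ 0 h00).2, h0, mul_zero])
  have hwΦ : w = Φ z := hinj hw (hΦs hz) (by rw [hwz, (hΦ z hz).2])
  rw [hwΦ]
  exact Complex.norm_le_norm_of_mapsTo_ball hΦd (hΦs.mono_right ball_subset_closedBall) hΦ0
    (mem_ball_zero_iff.1 hz)

theorem starlike_re_nonneg {h : ℂ → ℂ} (hd : DifferentiableOn ℂ h (ball 0 1))
    (h0 : h 0 = 0) (hne : ∀ z ∈ ball (0 : ℂ) 1, deriv h z ≠ 0) (hinj : InjOn h (ball 0 1))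
    (hstar : ∀ w ∈ h '' ball 0 1, segment ℝ 0 w ⊆ h '' ball 0 1) {z : ℂ}
    (hz : z ∈ ball (0 : ℂ) 1) : 0 ≤ (z * deriv h z / h z).re := by
  rcases eq_or_ne z 0 with rfl | hz0
  · simp
  have hhz : h z ≠ 0 := fun hc => hz0 (hinj hz (mem_ball_self one_pos) (by rw [hc, h0]))
  obtain ⟨L, hLz, hL, hLinv⟩ := exists_localInverse_of_deriv_ne_zero isOpen_ball hd hz (hne z hz)
  -- `W s = h⁻¹ (s • h z)` runs along the preimage of the segment `[0, h z]`
  set W : ℝ → ℂ := fun s => L (s * h z)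
  have hW : HasDerivAt W ((deriv h z)⁻¹ * h z) 1 := by
    have hlin : HasDerivAt (fun τ : ℂ => τ * h z) (h z) ((1 : ℝ) : ℂ) := by
      simpa using (hasDerivAt_id (1 : ℂ)).mul_const (h z)
    exact (hL.comp_of_eq ((1 : ℝ) : ℂ) hlin (by simp)).comp_ofReal
  have hW1 : W 1 = z := by simp [W, hLz]
  have hmax : IsLocalMaxOn (fun s => Real.log ‖W s‖) (Iic 1) 1 := by
    have hlin : Tendsto (fun s : ℝ => (s : ℂ) * h z) (𝓝 1) (𝓝 (h z)) :=
      (Complex.continuous_ofReal.mul continuous_const).tendsto' (1 : ℝ) (h z) (by simp)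
    filter_upwards [nhdsWithin_le_nhds (hlin.eventually hLinv),
      nhdsWithin_le_nhds (lt_mem_nhds one_pos), self_mem_nhdsWithin] with s ⟨hWs, hWh⟩ hs0 hs1
    have hWs0 : W s ≠ 0 := fun hc => by
      rw [show L (s * h z) = 0 from hc, h0] at hWh
      exact mul_ne_zero (Complex.ofReal_ne_zero.2 hs0.ne') hhz hWh.symm
    rw [hW1]
    exact Real.log_le_log (norm_pos_iff.2 hWs0) (starlike_norm_le_of_apply_eq_mul hd h0 hne hinj
      hstar ⟨hs0.le, hs1⟩ hz hWs hWh)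
  have hp0 : z * deriv h z / h z ≠ 0 := div_ne_zero (mul_ne_zero hz0 (hne z hz)) hhz
  have hinv := (hW.log_norm (hW1 ▸ hz0)).nonneg_of_isLocalMaxOn_Iic hmax
  rwa [hW1, show (deriv h z)⁻¹ * h z / z = (z * deriv h z / h z)⁻¹ by field_simp,
    Complex.inv_re, le_div_iff₀ (Complex.normSq_pos.2 hp0), zero_mul] at hinv

theorem starlike_distortion {h : ℂ → ℂ} (hd : DifferentiableOn ℂ h (ball 0 1)) (h0 : h 0 = 0)
    (h1 : deriv h 0 = 1) (hne : ∀ z ∈ ball (0 : ℂ) 1, deriv h z ≠ 0) (hinj : InjOn h (ball 0 1))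
    (hstar : ∀ w ∈ h '' ball 0 1, segment ℝ 0 w ⊆ h '' ball 0 1) {z : ℂ}
    (hz : z ∈ ball (0 : ℂ) 1) : 1 - ‖z‖ ≤ (1 + ‖z‖) ^ 3 * ‖deriv h z‖ := by
  have h00 : (0 : ℂ) ∈ ball (0 : ℂ) 1 := mem_ball_self one_pos
  set k := dslope h 0
  have hk : ∀ w, w * k w = h w := fun w => by simpa [h0] using sub_smul_dslope h 0 w
  have hkd : DifferentiableOn ℂ k (ball 0 1) :=
    (Complex.differentiableOn_dslope (isOpen_ball.mem_nhds h00)).2 hd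
  have hk0 : k 0 = 1 := by simp [k, h1]
  have hkne : ∀ w ∈ ball (0 : ℂ) 1, k w ≠ 0 := by
    intro w hw hkw
    rcases eq_or_ne w 0 with rfl | hw0
    · simp [hk0] at hkw
    · exact hw0 (hinj hw h00 (by rw [← hk w, hkw, mul_zero, h0]))
  -- `p` is `w h'/h`, extended to `0` by `p 0 = 1`
  set p : ℂ → ℂ := fun w => 1 + w * deriv k w / k w
  have hhp : ∀ w ∈ ball (0 : ℂ) 1, deriv h w = k w * p w := by
    intro w hw
    have hkw := (hkd.differentiableAt (isOpen_ball.mem_nhds hw)).hasDerivAt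
    have hhw : HasDerivAt h (k w + w * deriv k w) w := by
      rw [← funext hk]
      exact ((hasDerivAt_id' w).mul hkw).congr_deriv (by rw [one_mul])
    rw [hhw.deriv, mul_add, mul_one, mul_div_cancel₀ _ (hkne w hw)]
  have hpd : DifferentiableOn ℂ p (ball 0 1) :=
    (differentiableOn_const 1).add ((differentiableOn_id.mul (hkd.deriv isOpen_ball)).div hkd hkne)
  have hpre : ∀ w ∈ ball (0 : ℂ) 1, 0 ≤ (p w).re := by
    intro w hw
    rcases eq_or_ne w 0 with rfl | hw0
    · simp [p]
    · have hstarlike := starlike_re_nonneg hd h0 hne hinj hstar hw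
      rwa [hhp w hw, ← hk w, show w * (k w * p w) / (w * k w) = p w by
        field_simp [hw0, hkne w hw]] at hstarlike
  have hcar := fun w hw => caratheodory_re_lower_bound hpd (by simp [p]) hpre (z := w) hw
  have hgrowth := one_le_sq_mul_norm_of_re_lower_bound hkd hkne hk0 hcar hz
  rw [hhp z hz, norm_mul]
  calc 1 - ‖z‖ ≤ (1 + ‖z‖) * (p z).re := hcar z hz
    _ ≤ (1 + ‖z‖) * ‖p z‖ := by gcongr; exact Complex.re_le_norm _
    _ ≤ (1 + ‖z‖) * ‖p z‖ * ((1 + ‖z‖) ^ 2 * ‖k z‖) :=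
      le_mul_of_one_le_right (by positivity) hgrowth
    _ = _ := by ring

theorem stmt7_general
    (h g : ℂ → ℂ) (α : ℝ)
    (hd : DifferentiableOn ℂ h (Metric.ball (0:ℂ) 1))
    (gd : DifferentiableOn ℂ g (Metric.ball (0:ℂ) 1))
    (h0 : h 0 = 0) (h1 : deriv h 0 = 1)
    (hb1 : ‖deriv g 0‖ = α)
    (hsp : ∀ z ∈ Metric.ball (0:ℂ) 1, ‖deriv g z‖ < ‖deriv h z‖)
    (hinj : Set.InjOn h (Metric.ball (0:ℂ) 1))
    (hstar : ∀ w ∈ h '' (Metric.ball (0:ℂ) 1), segment ℝ 0 w ⊆ h '' (Metric.ball (0:ℂ) 1))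
 :
    ∀ z ∈ Metric.ball (0:ℂ) 1, ‖z‖ < α →
      (α - ‖z‖) * (1 - ‖z‖) / ((1 - α * ‖z‖) * (1 + ‖z‖) ^ 3)
        ≤ ‖deriv g z‖ := by
  intro z hz _
  have hne : ∀ w ∈ ball (0 : ℂ) 1, deriv h w ≠ 0 := fun w hw =>
    norm_pos_iff.1 ((norm_nonneg _).trans_lt (hsp w hw))
  -- the dilatation of `h + conj g`
  set ω : ℂ → ℂ := fun w => deriv g w / deriv h w
  have hωd : DifferentiableOn ℂ ω (ball 0 1) :=
    (gd.deriv isOpen_ball).div (hd.deriv isOpen_ball) hne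
  have hωmaps : MapsTo ω (ball 0 1) (ball 0 1) := fun w hw => by
    rw [mem_ball_zero_iff, norm_div, div_lt_one (norm_pos_iff.2 (hne w hw))]
    exact hsp w hw
  have hω0 : ‖ω 0‖ = α := by simp [ω, h1, hb1]
  have hα1 : α < 1 := hω0 ▸ mem_ball_zero_iff.1 (hωmaps (mem_ball_self one_pos))
  have hpick := schwarz_pick_lower_bound hωd hωmaps hz
  rw [hω0] at hpick
  have hdist := starlike_distortion hd h0 h1 hne hinj hstar hz
  have hr1 : ‖z‖ < 1 := mem_ball_zero_iff.1 hz
  have hg : ‖deriv g z‖ = ‖ω z‖ * ‖deriv h z‖ := by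
    rw [← norm_mul, div_mul_cancel₀ _ (hne z hz)]
  have hα0 : 0 ≤ α := hb1 ▸ norm_nonneg _
  have hpos : 0 < 1 - α * ‖z‖ := by nlinarith [norm_nonneg z]
  rw [div_le_iff₀ (by positivity), hg]
  calc (α - ‖z‖) * (1 - ‖z‖)
      ≤ ‖ω z‖ * (1 - α * ‖z‖) * ((1 + ‖z‖) ^ 3 * ‖deriv h z‖) :=
        mul_le_mul hpick hdist (by linarith) (by positivity)
    _ = _ := by ring

theorem stmt7
    (h g : ℂ → ℂ) (α : ℝ) (hα : α ∈ Set.Ico (0:ℝ) 1)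
    (hd : DifferentiableOn ℂ h (Metric.ball (0:ℂ) 1))
    (gd : DifferentiableOn ℂ g (Metric.ball (0:ℂ) 1))
    (h0 : h 0 = 0) (h1 : deriv h 0 = 1) (g0 : g 0 = 0)
    (hb1 : ‖deriv g 0‖ = α)
    (hsp : ∀ z ∈ Metric.ball (0:ℂ) 1, ‖deriv g z‖ < ‖deriv h z‖)
    (hinj : Set.InjOn h (Metric.ball (0:ℂ) 1))
    (hstar : ∀ w ∈ h '' (Metric.ball (0:ℂ) 1), segment ℝ 0 w ⊆ h '' (Metric.ball (0:ℂ) 1))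
 :
    ∀ z ∈ Metric.ball (0:ℂ) 1, ‖z‖ < α →
      (α - ‖z‖) * (1 - ‖z‖) / ((1 - α * ‖z‖) * (1 + ‖z‖) ^ 3)
        ≤ ‖deriv g z‖ :=
  stmt7_general h g α hd gd h0 h1 hb1 hsp hinj hstar
end

section
/- Let f = h + conj(g) ∈ Ľ_H^α. Then for z ∈ Δ with |z| < α, |g(z)| ≥ |z|(α - |z|) / ((1 - α|z|)(1 + |z|)²). -/
/-!
Write `g = ω h` with `ω` holomorphic on the disc and `ω(0) = g'(0)`. Since `h(Δ)` is starlike,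
the curves `t ↦ h⁻¹(t h(z))`, `t ∈ [0, 1]`, stay in the disc, and integrating `g'` along them
gives `|g| ≤ |h|`; hence `|ω| ≤ 1`, and the Schwarz–Pick lemma yields
`|ω(z)| ≥ (α - |z|) / (1 - α|z|)`. Applying the Schwarz lemma to `h⁻¹(t h)` and differentiating at
`t = 1` gives `Re (z h'/h) ≥ 0`; Carathéodory's bound for the holomorphic function
`h' / (h / z)` then integrates along the radius to the growth estimate `|h(z)| ≥ |z| / (1 + |z|)²`.
-/

open Metric Set Function Topology Complex ComplexConjugate

local notation "𝔻" => Metric.ball (0 : ℂ) 1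

lemma normSq_one_sub_conj_mul_sub_normSq_sub (a b : ℂ) :
    normSq (1 - conj a * b) - normSq (a - b) = (1 - normSq a) * (1 - normSq b) := by
  simp only [normSq_apply, sub_re, sub_im, one_re, one_im, mul_re, mul_im, conj_re, conj_im]
  ring

lemma norm_sub_le_norm_one_sub_conj_mul {a b : ℂ} (ha : ‖a‖ ≤ 1) (hb : ‖b‖ ≤ 1) :
    ‖a - b‖ ≤ ‖1 - conj a * b‖ := by
  have hD : 0 ≤ (1 - ‖a‖ ^ 2) * (1 - ‖b‖ ^ 2) :=
    mul_nonneg (by nlinarith [norm_nonneg a]) (by nlinarith [norm_nonneg b])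
  have := normSq_one_sub_conj_mul_sub_normSq_sub a b
  simp only [normSq_eq_norm_sq] at this
  exact (sq_le_sq₀ (norm_nonneg _) (norm_nonneg _)).1 (by linarith)

/-- The pseudo-hyperbolic distance from `a` to `b` is at least that from `‖a‖` to `‖b‖`. -/
lemma norm_sub_le_norm_mul_of_norm_sub_le {a b : ℂ} {r : ℝ} (ha : ‖a‖ ≤ 1) (hb : ‖b‖ ≤ 1)
    (hr₀ : 0 ≤ r) (hr₁ : r ≤ 1) (hab : ‖a - b‖ ≤ r * ‖1 - conj a * b‖) :
    ‖a‖ - r ≤ ‖b‖ * (1 - ‖a‖ * r) := by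
  set X := ‖1 - conj a * b‖ ^ 2
  set D := (1 - ‖a‖ ^ 2) * (1 - ‖b‖ ^ 2)
  have hXD : ‖a - b‖ ^ 2 = X - D := by
    have := normSq_one_sub_conj_mul_sub_normSq_sub a b
    simp only [normSq_eq_norm_sq] at this
    linarith
  have hab_sq : X - D ≤ r ^ 2 * X := by
    rw [← hXD, ← mul_pow]
    exact pow_le_pow_left₀ (norm_nonneg _) hab 2
  have hprod : ‖a‖ * ‖b‖ ≤ 1 := mul_le_one₀ ha (norm_nonneg b) hb
  have hXY : (1 - ‖a‖ * ‖b‖) ^ 2 ≤ X := by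
    refine pow_le_pow_left₀ (by linarith) ?_ 2
    calc 1 - ‖a‖ * ‖b‖ = ‖(1 : ℂ)‖ - ‖conj a * b‖ := by simp
      _ ≤ ‖1 - conj a * b‖ := norm_sub_norm_le _ _
  by_contra! hcon
  have hlt : r * (1 - ‖a‖ * ‖b‖) < ‖a‖ - ‖b‖ := by linarith
  have hsq : r ^ 2 * (1 - ‖a‖ * ‖b‖) ^ 2 < (‖a‖ - ‖b‖) ^ 2 := by
    rw [← mul_pow]
    exact pow_lt_pow_left₀ hlt (mul_nonneg hr₀ (by linarith)) two_ne_zero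
  have hr2 : 0 ≤ 1 - r ^ 2 := by nlinarith
  nlinarith [mul_le_mul_of_nonneg_left hXY hr2]

theorem schwarzPick_lower_bound {F : ℂ → ℂ} (hF : DifferentiableOn ℂ F 𝔻)
    (hmaps : MapsTo F 𝔻 (closedBall 0 1)) (hF0 : ‖F 0‖ < 1) {z : ℂ} (hz : z ∈ 𝔻) :
    ‖F 0‖ - ‖z‖ ≤ ‖F z‖ * (1 - ‖F 0‖ * ‖z‖) := by
  have hF1 : ∀ w ∈ 𝔻, ‖F w‖ ≤ 1 := fun w hw => mem_closedBall_zero_iff.1 (hmaps hw)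
  have hden : ∀ w ∈ 𝔻, 1 - conj (F 0) * F w ≠ 0 := by
    intro w hw hw0
    have : ‖conj (F 0) * F w‖ < 1 := by
      rw [norm_mul, RCLike.norm_conj]
      exact mul_lt_one_of_nonneg_of_lt_one_left (norm_nonneg _) hF0 (hF1 w hw)
    simp [← sub_eq_zero.1 hw0] at this
  set G : ℂ → ℂ := fun w => (F 0 - F w) / (1 - conj (F 0) * F w)
  have hG : DifferentiableOn ℂ G 𝔻 :=
    ((differentiableOn_const _).sub hF).div
      ((differentiableOn_const _).sub ((differentiableOn_const _).mul hF)) hden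
  have hGmaps : MapsTo G 𝔻 (closedBall 0 1) := by
    intro w hw
    rw [mem_closedBall_zero_iff, norm_div, div_le_one (norm_pos_iff.2 (hden w hw))]
    exact norm_sub_le_norm_one_sub_conj_mul hF0.le (hF1 w hw)
  have hGz : ‖G z‖ ≤ ‖z‖ :=
    Complex.norm_le_norm_of_mapsTo_ball hG hGmaps (by simp [G]) (mem_ball_zero_iff.1 hz)
  rw [norm_div, div_le_iff₀ (norm_pos_iff.2 (hden z hz))] at hGz
  exact norm_sub_le_norm_mul_of_norm_sub_le hF0.le (hF1 z hz) (norm_nonneg z)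
    (mem_ball_zero_iff.1 hz).le hGz

lemma div_le_re_one_add_div_one_sub {q : ℂ} {r : ℝ} (hq : ‖q‖ ≤ r) (hr : r < 1) :
    (1 - r) / (1 + r) ≤ ((1 + q) / (1 - q)).re := by
  have hq2 : q.re ^ 2 + q.im ^ 2 ≤ r ^ 2 := by
    have := normSq_eq_norm_sq q
    rw [normSq_apply] at this
    nlinarith [pow_le_pow_left₀ (norm_nonneg q) hq 2]
  have hre := neg_abs_le q.re
  have hre' := le_abs_self q.re
  have habs := (abs_re_le_norm q).trans hq
  have hden : 0 < (1 - q.re) ^ 2 + q.im ^ 2 := by nlinarith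
  have hnum : ((1 + q) / (1 - q)).re
      = (1 - (q.re ^ 2 + q.im ^ 2)) / ((1 - q.re) ^ 2 + q.im ^ 2) := by
    rw [div_re, ← add_div, normSq_apply]
    simp only [add_re, add_im, sub_re, sub_im, one_re, one_im]
    ring_nf
  rw [hnum, div_le_div_iff₀ (by linarith) hden]
  nlinarith [mul_nonneg (by linarith : 0 ≤ q.re + r) (by linarith : 0 ≤ 1 - r)]

theorem one_sub_div_one_add_le_re_of_re_nonneg {P : ℂ → ℂ} (hP : DifferentiableOn ℂ P 𝔻)
    (hP0 : P 0 = 1) (hre : ∀ w ∈ 𝔻, 0 ≤ (P w).re) {z : ℂ} (hz : z ∈ 𝔻) :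
    (1 - ‖z‖) / (1 + ‖z‖) ≤ (P z).re := by
  have hden : ∀ w ∈ 𝔻, P w + 1 ≠ 0 := fun w hw h0 => by
    have := congrArg re h0
    simp only [add_re, one_re, zero_re] at this
    linarith [hre w hw]
  set q : ℂ → ℂ := fun w => (P w - 1) / (P w + 1)
  have hq : DifferentiableOn ℂ q 𝔻 :=
    (hP.sub (differentiableOn_const _)).div (hP.add (differentiableOn_const _)) hden
  have hqmaps : MapsTo q 𝔻 (closedBall 0 1) := by
    intro w hw
    rw [mem_closedBall_zero_iff, norm_div, div_le_one (norm_pos_iff.2 (hden w hw)),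
      ← sq_le_sq₀ (norm_nonneg _) (norm_nonneg _), ← normSq_eq_norm_sq, ← normSq_eq_norm_sq]
    simp only [normSq_apply, sub_re, sub_im, add_re, add_im, one_re, one_im]
    nlinarith [hre w hw]
  have hqz : ‖q z‖ ≤ ‖z‖ :=
    Complex.norm_le_norm_of_mapsTo_ball hq hqmaps (by simp [q, hP0]) (mem_ball_zero_iff.1 hz)
  have hPq : P z = (1 + q z) / (1 - q z) := by
    have hz1 := hden z hz
    have hsub : 1 - q z = 2 / (P z + 1) := by simp only [q]; field_simp; ring
    have hadd : 1 + q z = 2 * P z / (P z + 1) := by simp only [q]; field_simp; ring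
    rw [hsub, hadd]
    field_simp
  rw [hPq]
  exact div_le_re_one_add_div_one_sub hqz (mem_ball_zero_iff.1 hz)

lemma norm_le_norm_of_re_deriv_div_nonneg {f f' : ℝ → ℂ} {a b : ℝ} (hab : a ≤ b)
    (hf : ContinuousOn f (Icc a b)) (hf' : ∀ t ∈ Ioo a b, HasDerivAt f (f' t) t)
    (hre : ∀ t ∈ Ioo a b, 0 ≤ (f' t / f t).re) : ‖f a‖ ≤ ‖f b‖ := by
  have hmono : MonotoneOn (‖f ·‖ ^ 2) (Icc a b) := by
    refine monotoneOn_of_hasDerivWithinAt_nonneg (convex_Icc a b)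
      (hf.norm.pow 2) (fun t ht => ?_) (fun t ht => ?_) (f' := fun t => 2 * inner ℝ (f t) (f' t))
    · rw [interior_Icc] at ht ⊢
      exact ((hf' t ht).norm_sq).hasDerivWithinAt
    · rw [interior_Icc] at ht
      have hconj : f' t * conj (f t) = (normSq (f t) : ℂ) * (f' t / f t) := by
        rcases eq_or_ne (f t) 0 with h0 | h0
        · simp [h0]
        · rw [normSq_eq_conj_mul_self]; field_simp
      rw [Complex.inner, hconj, re_ofReal_mul]
      exact mul_nonneg zero_le_two (mul_nonneg (normSq_nonneg _) (hre t ht))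
  exact (sq_le_sq₀ (norm_nonneg _) (norm_nonneg _)).1 <|
    hmono (left_mem_Icc.2 hab) (right_mem_Icc.2 hab) hab

theorem norm_le_one_add_sq_mul_norm_of_re_mul_logDeriv_ge {H : ℂ → ℂ}
    (hH : DifferentiableOn ℂ H 𝔻) (hne : ∀ w ∈ 𝔻, H w ≠ 0)
    (hre : ∀ w ∈ 𝔻, -(2 * ‖w‖ / (1 + ‖w‖)) ≤ (w * logDeriv H w).re)
    {u : ℂ} (hu : ‖u‖ = 1) {r : ℝ} (hr₀ : 0 ≤ r) (hr₁ : r < 1) :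
    ‖H 0‖ ≤ (1 + r) ^ 2 * ‖H (r * u)‖ := by
  have hnorm : ∀ t : ℝ, 0 ≤ t → ‖(t : ℂ) * u‖ = t := fun t ht => by
    rw [norm_mul, hu, mul_one, Complex.norm_of_nonneg ht]
  have hmem : ∀ t ∈ Icc 0 r, (t : ℂ) * u ∈ 𝔻 := fun t ht => by
    rw [mem_ball_zero_iff, hnorm t ht.1]; exact ht.2.trans_lt hr₁
  -- `v t = (1 + t)² H(t u)` has `re (v' / v) ≥ 0`, so `‖v‖` increases along `[0, r]`.
  set v : ℝ → ℂ := fun t => (1 + t) ^ 2 * H (t * u)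
  set v' : ℝ → ℂ := fun t => 2 * (1 + t) * H (t * u) + (1 + t) ^ 2 * (deriv H (t * u) * u)
  have hv : ∀ t ∈ Icc 0 r, HasDerivAt v (v' t) t := fun t ht => by
    have hHt := (hH.differentiableAt (isOpen_ball.mem_nhds (hmem t ht))).hasDerivAt
    have hV : HasDerivAt (fun w : ℂ => (1 + w) ^ 2 * H (w * u)) (v' t) t :=
      ((((hasDerivAt_id' (t : ℂ)).const_add 1).fun_pow 2).fun_mul
        (hHt.comp (t : ℂ) ((hasDerivAt_id' (t : ℂ)).mul_const u))).congr_deriv (by simp [v'])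
    exact hV.comp_ofReal
  have hvre : ∀ t ∈ Ioo 0 r, 0 ≤ (v' t / v t).re := by
    intro t ⟨ht₀, htr⟩
    have hx := hmem t ⟨ht₀.le, htr.le⟩
    have hlog : v' t / v t
        = ((2 / (1 + t) : ℝ) : ℂ) + ((1 / t : ℝ) : ℂ) * (t * u * logDeriv H (t * u)) := by
      have ht : (t : ℂ) ≠ 0 := by exact_mod_cast ht₀.ne'
      have ht1 : (1 + t : ℂ) ≠ 0 := by exact_mod_cast (by linarith : (1 + t) ≠ 0)
      have := hne _ hx
      simp only [v, v', logDeriv_apply]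
      push_cast
      field_simp
    have hQ := hre _ hx
    rw [hnorm t ht₀.le] at hQ
    rw [hlog, add_re, ofReal_re, re_ofReal_mul]
    have : 2 / (1 + t) + 1 / t * -(2 * t / (1 + t)) = 0 := by
      field_simp; ring
    nlinarith [mul_le_mul_of_nonneg_left hQ (one_div_nonneg.2 ht₀.le)]
  have hmono := norm_le_norm_of_re_deriv_div_nonneg hr₀
    (fun t ht => (hv t ht).continuousAt.continuousWithinAt)
    (fun t ht => hv t (Ioo_subset_Icc_self ht)) hvre
  have h1r : ‖1 + (r : ℂ)‖ = 1 + r := by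
    rw [← ofReal_one, ← ofReal_add, Complex.norm_of_nonneg (by positivity)]
  simpa [v, h1r] using hmono

lemma apply_eq_mul_dslope {𝕜 : Type*} [NontriviallyNormedField 𝕜] {f : 𝕜 → 𝕜} (hf0 : f 0 = 0)
    (w : 𝕜) : f w = w * dslope f 0 w := by
  simpa [hf0] using (sub_smul_dslope f 0 w).symm

lemma dslope_ne_zero_of_map_zero {𝕜 : Type*} [NontriviallyNormedField 𝕜] {f : 𝕜 → 𝕜}
    (hf0 : f 0 = 0) (hf' : deriv f 0 ≠ 0) {w : 𝕜} (hw : w ≠ 0 → f w ≠ 0) :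
    dslope f 0 w ≠ 0 := by
  rcases eq_or_ne w 0 with rfl | hw0
  · rwa [dslope_same]
  · exact fun h => hw hw0 (by rw [apply_eq_mul_dslope hf0, h, mul_zero])

theorem exists_differentiableOn_eq_mul {g h : ℂ → ℂ} (hg : DifferentiableOn ℂ g 𝔻)
    (hd : DifferentiableOn ℂ h 𝔻) (g0 : g 0 = 0) (h0 : h 0 = 0) (h1 : deriv h 0 = 1)
    (hne : ∀ w ∈ 𝔻, w ≠ 0 → h w ≠ 0) :
    ∃ ω : ℂ → ℂ, DifferentiableOn ℂ ω 𝔻 ∧ ω 0 = deriv g 0 ∧ ∀ w ∈ 𝔻, g w = ω w * h w := by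
  have hH : ∀ w ∈ 𝔻, dslope h 0 w ≠ 0 := fun w hw =>
    dslope_ne_zero_of_map_zero h0 (h1 ▸ one_ne_zero) (hne w hw)
  have hball : 𝔻 ∈ 𝓝 0 := ball_mem_nhds 0 one_pos
  refine ⟨fun w => dslope g 0 w / dslope h 0 w, ((differentiableOn_dslope hball).2 hg).div
    ((differentiableOn_dslope hball).2 hd) hH, by simp [h1], fun w hw => ?_⟩
  rw [apply_eq_mul_dslope g0 w, apply_eq_mul_dslope h0 w]
  field_simp [hH w hw]

-- `h' / (h / z) = 1 + z (h / z)' / (h / z)` is holomorphic, equal to `1` at `0`, and has real part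
-- `re (z h' / h) ≥ 0`; Carathéodory's bound for it is the claim.
theorem neg_div_le_re_mul_logDeriv_dslope {h : ℂ → ℂ} (hd : DifferentiableOn ℂ h 𝔻)
    (h0 : h 0 = 0) (h1 : deriv h 0 = 1) (hne : ∀ w ∈ 𝔻, w ≠ 0 → h w ≠ 0)
    (hre : ∀ w ∈ 𝔻, 0 ≤ (w * logDeriv h w).re) {x : ℂ} (hx : x ∈ 𝔻) :
    -(2 * ‖x‖ / (1 + ‖x‖)) ≤ (x * logDeriv (dslope h 0) x).re := by
  set H := dslope h 0
  have hH : DifferentiableOn ℂ H 𝔻 := (differentiableOn_dslope (ball_mem_nhds 0 one_pos)).2 hd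
  have hHne : ∀ w ∈ 𝔻, H w ≠ 0 := fun w hw =>
    dslope_ne_zero_of_map_zero h0 (h1 ▸ one_ne_zero) (hne w hw)
  have hH0 : H 0 = 1 := by simp [H, h1]
  have hhH : ∀ w, h w = w * H w := apply_eq_mul_dslope h0
  have hderiv : deriv h x = H x + x * deriv H x := by
    have hHx := (hH.differentiableAt (isOpen_ball.mem_nhds hx)).hasDerivAt
    rw [funext hhH, ((hasDerivAt_id' x).fun_mul hHx).deriv, one_mul]
  clear_value H
  set P : ℂ → ℂ := fun w => deriv h w / H w
  have hcara : (1 - ‖x‖) / (1 + ‖x‖) ≤ (P x).re := by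
    refine one_sub_div_one_add_le_re_of_re_nonneg ?_ (by simp [P, hH0, h1]) (fun w hw => ?_) hx
    · exact (hd.analyticOnNhd isOpen_ball).deriv.differentiableOn.div hH hHne
    · rcases eq_or_ne w 0 with rfl | hw0
      · simp [P, hH0, h1]
      · have : P w = w * logDeriv h w := by
          simp only [P, logDeriv_apply, hhH w]
          field_simp [hHne w hw]
        exact this ▸ hre w hw
  have hP : P x = 1 + x * logDeriv H x := by
    simp only [P, logDeriv_apply, hderiv]
    field_simp [hHne x hx]
  rw [hP, add_re, one_re] at hcara
  have : (1 - ‖x‖) / (1 + ‖x‖) - 1 = -(2 * ‖x‖ / (1 + ‖x‖)) := by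
    field_simp; ring
  linarith

theorem div_one_add_sq_le_norm_of_re_mul_logDeriv_nonneg {h : ℂ → ℂ}
    (hd : DifferentiableOn ℂ h 𝔻) (h0 : h 0 = 0) (h1 : deriv h 0 = 1)
    (hne : ∀ w ∈ 𝔻, w ≠ 0 → h w ≠ 0) (hre : ∀ w ∈ 𝔻, 0 ≤ (w * logDeriv h w).re)
    {z : ℂ} (hz : z ∈ 𝔻) :
    ‖z‖ / (1 + ‖z‖) ^ 2 ≤ ‖h z‖ := by
  rcases eq_or_ne z 0 with rfl | hz0
  · simp
  have hr : 0 < ‖z‖ := norm_pos_iff.2 hz0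
  have hz' : (‖z‖ : ℂ) * (z / ‖z‖) = z := mul_div_cancel₀ z (by exact_mod_cast hr.ne')
  have hgrowth := norm_le_one_add_sq_mul_norm_of_re_mul_logDeriv_ge
    ((differentiableOn_dslope (ball_mem_nhds 0 one_pos)).2 hd)
    (fun w hw => dslope_ne_zero_of_map_zero h0 (h1 ▸ one_ne_zero) (hne w hw))
    (fun x hx => neg_div_le_re_mul_logDeriv_dslope hd h0 h1 hne hre hx)
    (u := z / ‖z‖) (by simp [hr.ne']) hr.le (mem_ball_zero_iff.1 hz)
  rw [dslope_same, h1, norm_one, hz'] at hgrowth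
  rw [apply_eq_mul_dslope h0 z, norm_mul, div_le_iff₀ (by positivity)]
  nlinarith

lemma HasDerivWithinAt.nonneg_of_isMaxOn_Icc {f : ℝ → ℝ} {f' a b : ℝ} (hab : a < b)
    (hf : HasDerivWithinAt f f' (Icc a b) b) (hmax : IsMaxOn f (Icc a b) b) : 0 ≤ f' := by
  have hcone : a - b ∈ posTangentConeAt (Icc a b) b :=
    sub_mem_posTangentConeAt_of_segment_subset (segment_symm ℝ b a ▸ segment_eq_Icc hab.le).subset
  have := hmax.localize.hasFDerivWithinAt_nonpos hf hcone
  rw [ContinuousLinearMap.toSpanSingleton_apply, smul_eq_mul] at this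
  nlinarith

theorem HasStrictDerivAt.invFunOn {h : ℂ → ℂ} {s : Set ℂ} {x : ℂ} (hs : IsOpen s)
    (hd : DifferentiableOn ℂ h s) (hinj : InjOn h s) (hx : x ∈ s) (h'x : deriv h x ≠ 0) :
    HasStrictDerivAt (invFunOn h s) (deriv h x)⁻¹ (h x) :=
  (hd.analyticAt (hs.mem_nhds hx)).hasStrictDerivAt.to_local_left_inverse h'x <|
    Filter.eventually_of_mem (hs.mem_nhds hx) fun _ hy => hinj.leftInvOn_invFunOn hy

noncomputable def radialPreimage (h : ℂ → ℂ) (t : ℝ) (z : ℂ) : ℂ := invFunOn h 𝔻 (t * h z)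

section Starlike

variable {h : ℂ → ℂ} {t : ℝ} {z : ℂ}

lemma radialPreimage_mem_and_eq (hstar : StarConvex ℝ 0 (h '' 𝔻)) (ht : t ∈ Icc (0 : ℝ) 1)
    (hz : z ∈ 𝔻) : radialPreimage h t z ∈ 𝔻 ∧ h (radialPreimage h t z) = t * h z := by
  have hex : ∃ x ∈ 𝔻, h x = t * h z := by
    simpa [Complex.real_smul] using hstar.smul_mem (mem_image_of_mem h hz) ht.1 ht.2
  exact ⟨invFunOn_mem hex, invFunOn_eq hex⟩

lemma radialPreimage_eq (hinj : InjOn h 𝔻) {x : ℂ} (hx : x ∈ 𝔻) (hxz : h x = t * h z) :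
    radialPreimage h t z = x := by
  rw [radialPreimage, ← hxz]
  exact hinj.leftInvOn_invFunOn hx

lemma hasDerivAt_radialPreimage (hd : DifferentiableOn ℂ h 𝔻) (hinj : InjOn h 𝔻)
    (hstar : StarConvex ℝ 0 (h '' 𝔻)) (h'0 : ∀ x ∈ 𝔻, deriv h x ≠ 0)
    (ht : t ∈ Icc (0 : ℝ) 1) (hz : z ∈ 𝔻) :
    HasDerivAt (radialPreimage h · z) ((deriv h (radialPreimage h t z))⁻¹ * h z) t := by
  obtain ⟨hmem, heq⟩ := radialPreimage_mem_and_eq hstar ht hz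
  have hinv := HasStrictDerivAt.invFunOn isOpen_ball hd hinj hmem (h'0 _ hmem)
  rw [heq] at hinv
  exact (hinv.hasDerivAt.comp (t : ℂ) ((hasDerivAt_id' (t : ℂ)).mul_const (h z))).comp_ofReal
    |>.congr_deriv (by simp)

lemma norm_radialPreimage_le (hd : DifferentiableOn ℂ h 𝔻) (hinj : InjOn h 𝔻)
    (hstar : StarConvex ℝ 0 (h '' 𝔻)) (h'0 : ∀ x ∈ 𝔻, deriv h x ≠ 0) (h0 : h 0 = 0)
    (ht : t ∈ Icc (0 : ℝ) 1) (hz : z ∈ 𝔻) : ‖radialPreimage h t z‖ ≤ ‖z‖ := by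
  refine Complex.norm_le_norm_of_mapsTo_ball (fun w hw => ?_)
    (fun w hw => ball_subset_closedBall (radialPreimage_mem_and_eq hstar ht hw).1)
    (radialPreimage_eq hinj (mem_ball_self one_pos) (by simp [h0])) (mem_ball_zero_iff.1 hz)
  obtain ⟨hmem, heq⟩ := radialPreimage_mem_and_eq hstar ht hw
  have hinv := HasStrictDerivAt.invFunOn isOpen_ball hd hinj hmem (h'0 _ hmem)
  rw [heq] at hinv
  exact (hinv.hasDerivAt.differentiableAt.comp w
    ((hd.differentiableAt (isOpen_ball.mem_nhds hw)).const_mul _)).differentiableWithinAt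

theorem re_mul_logDeriv_nonneg_of_starConvex (hd : DifferentiableOn ℂ h 𝔻)
    (hinj : InjOn h 𝔻) (hstar : StarConvex ℝ 0 (h '' 𝔻)) (h'0 : ∀ x ∈ 𝔻, deriv h x ≠ 0)
    (h0 : h 0 = 0) (hz : z ∈ 𝔻) : 0 ≤ (z * logDeriv h z).re := by
  rcases eq_or_ne z 0 with rfl | hz0
  · simp
  have hhz : h z ≠ 0 := fun hhz => hz0 (hinj hz (mem_ball_self one_pos) (hhz.trans h0.symm))
  have hγ1 : radialPreimage h 1 z = z := radialPreimage_eq hinj hz (by simp)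
  have hγ' : HasDerivAt (radialPreimage h · z) ((deriv h z)⁻¹ * h z) 1 := by
    simpa [hγ1] using hasDerivAt_radialPreimage hd hinj hstar h'0 (right_mem_Icc.2 zero_le_one) hz
  have hmax : IsMaxOn (‖radialPreimage h · z‖ ^ 2) (Icc 0 1) 1 := fun s hs => by
    show ‖_‖ ^ 2 ≤ ‖_‖ ^ 2
    rw [hγ1]
    exact pow_le_pow_left₀ (norm_nonneg _) (norm_radialPreimage_le hd hinj hstar h'0 h0 hs hz) 2
  have hfermat := hγ'.norm_sq.hasDerivWithinAt.nonneg_of_isMaxOn_Icc zero_lt_one hmax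
  rw [Complex.inner, hγ1] at hfermat
  have hlog : z * logDeriv h z = (normSq z : ℂ) * ((deriv h z)⁻¹ * h z * conj z)⁻¹ := by
    rw [logDeriv_apply, normSq_eq_conj_mul_self]
    have : conj z ≠ 0 := by simpa using hz0
    field_simp [h'0 z hz]
  rw [hlog, re_ofReal_mul, inv_re]
  exact mul_nonneg (normSq_nonneg z) (div_nonneg (by linarith) (normSq_nonneg _))

theorem norm_le_norm_of_norm_deriv_le {g : ℂ → ℂ} (hd : DifferentiableOn ℂ h 𝔻)
    (hinj : InjOn h 𝔻) (hstar : StarConvex ℝ 0 (h '' 𝔻)) (h'0 : ∀ x ∈ 𝔻, deriv h x ≠ 0)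
    (h0 : h 0 = 0) (hg : DifferentiableOn ℂ g 𝔻) (g0 : g 0 = 0)
    (hgh : ∀ x ∈ 𝔻, ‖deriv g x‖ ≤ ‖deriv h x‖) (hz : z ∈ 𝔻) : ‖g z‖ ≤ ‖h z‖ := by
  -- Integrate `g'` along the curve `t ↦ h⁻¹(t h(z))`, on which `h' dz = h(z) dt`.
  set γ := (radialPreimage h · z)
  have hγ : ∀ s ∈ Icc (0 : ℝ) 1, HasDerivWithinAt (g ∘ γ)
      (deriv g (γ s) * ((deriv h (γ s))⁻¹ * h z)) (Icc 0 1) s := fun s hs => by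
    have hmem := (radialPreimage_mem_and_eq hstar hs hz).1
    exact ((hg.differentiableAt (isOpen_ball.mem_nhds hmem)).hasDerivAt.comp s
      (hasDerivAt_radialPreimage hd hinj hstar h'0 hs hz)).hasDerivWithinAt
  have hbound : ∀ s ∈ Ico (0 : ℝ) 1, ‖deriv g (γ s) * ((deriv h (γ s))⁻¹ * h z)‖ ≤ ‖h z‖ := by
    intro s hs
    have hmem := (radialPreimage_mem_and_eq hstar (Ico_subset_Icc_self hs) hz).1
    rw [norm_mul, norm_mul, norm_inv, ← mul_assoc]
    refine mul_le_of_le_one_left (norm_nonneg _) ?_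
    exact mul_inv_le_one_of_le₀ (hgh _ hmem) (norm_nonneg _)
  have hγ0 : γ 0 = 0 := radialPreimage_eq hinj (mem_ball_self one_pos) (by simp [h0])
  have hγ1 : γ 1 = z := radialPreimage_eq hinj hz (by simp)
  simpa [hγ0, hγ1, g0] using norm_image_sub_le_of_norm_deriv_le_segment_01' hγ hbound

end Starlike

theorem stmt12
    (h g : ℂ → ℂ) (α : ℝ) (hα : α ∈ Set.Ico (0:ℝ) 1)
    (hd : DifferentiableOn ℂ h (Metric.ball (0:ℂ) 1))
    (gd : DifferentiableOn ℂ g (Metric.ball (0:ℂ) 1))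
    (h0 : h 0 = 0) (h1 : deriv h 0 = 1) (g0 : g 0 = 0)
    (hb1 : ‖deriv g 0‖ = α)
    (hsp : ∀ z ∈ Metric.ball (0:ℂ) 1, ‖deriv g z‖ < ‖deriv h z‖)
    (hinj : Set.InjOn h (Metric.ball (0:ℂ) 1))
    (hstar : ∀ w ∈ h '' (Metric.ball (0:ℂ) 1), segment ℝ 0 w ⊆ h '' (Metric.ball (0:ℂ) 1))
 :
    ∀ z ∈ Metric.ball (0:ℂ) 1, ‖z‖ < α →
      ‖z‖ * (α - ‖z‖) / ((1 - α * ‖z‖) * (1 + ‖z‖) ^ 2) ≤ ‖g z‖ := by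
  intro z hz hzα
  have hstar : StarConvex ℝ 0 (h '' 𝔻) := starConvex_iff_segment_subset.2 hstar
  have h'0 : ∀ x ∈ 𝔻, deriv h x ≠ 0 := fun x hx =>
    norm_pos_iff.1 ((norm_nonneg _).trans_lt (hsp x hx))
  have hne : ∀ w ∈ 𝔻, w ≠ 0 → h w ≠ 0 := fun w hw hw0 hhw =>
    hw0 (hinj hw (mem_ball_self one_pos) (hhw.trans h0.symm))
  obtain ⟨ω, hω, hω0, hgω⟩ := exists_differentiableOn_eq_mul gd hd g0 h0 h1 hne
  have hωmaps : MapsTo ω 𝔻 (closedBall 0 1) := fun w hw => by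
    rw [mem_closedBall_zero_iff]
    rcases eq_or_ne w 0 with rfl | hw0
    · exact hω0 ▸ hb1 ▸ hα.2.le
    · have := norm_le_norm_of_norm_deriv_le hd hinj hstar h'0 h0 gd g0
        (fun x hx => (hsp x hx).le) hw
      rw [hgω w hw, norm_mul] at this
      exact (mul_le_iff_le_one_left (norm_pos_iff.2 (hne w hw hw0))).1 this
  have hpick := schwarzPick_lower_bound hω hωmaps (by rw [hω0, hb1]; exact hα.2) hz
  have hgrowth := div_one_add_sq_le_norm_of_re_mul_logDeriv_nonneg hd h0 h1 hne
    (fun w hw => re_mul_logDeriv_nonneg_of_starConvex hd hinj hstar h'0 h0 hw) hz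
  rw [hω0, hb1] at hpick
  have hden : 0 < 1 - α * ‖z‖ := by nlinarith [norm_nonneg z, hα.2]
  rw [hgω z hz, norm_mul]
  calc ‖z‖ * (α - ‖z‖) / ((1 - α * ‖z‖) * (1 + ‖z‖) ^ 2)
      = (α - ‖z‖) / (1 - α * ‖z‖) * (‖z‖ / (1 + ‖z‖) ^ 2) := by rw [div_mul_div_comm, mul_comm]
    _ ≤ ‖ω z‖ * ‖h z‖ :=
      mul_le_mul ((div_le_iff₀ hden).2 hpick) hgrowth (by positivity) (norm_nonneg _)
end

section
/- For all α ∈ [0,1) and r ∈ [0,1): ((1-α)/(1+α))² · log((1 + αr)/(1 - r)) + r/(1 - r)² - ((1-α)/(1+α)) · 2r/(1 - r) ≤ r(α + r) / ((1 + αr)(1 - r)²). -/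
/-! Bounding `log x ≤ x - 1` on both factors gives
`log ((1 + α r) / (1 - r)) ≤ α r + r / (1 - r)`; after this substitution the gap to the right-hand
side is the explicit rational function `α r² (1 - α) (2 (1 + α) - α (1 - α) (1 - r))` over a
positive denominator. -/

open Metric Set

open Real

lemma log_div_one_sub_le {a r : ℝ} (ha : 0 < a) (hr : r < 1) :
    log (a / (1 - r)) ≤ (a - 1) + r / (1 - r) := by
  have h1r : 0 < 1 - r := sub_pos.mpr hr
  have hinv : 1 - (1 - r)⁻¹ = -(r / (1 - r)) := by field_simp; ring
  rw [log_div ha.ne' h1r.ne']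
  linarith [log_le_sub_one_of_pos ha, one_sub_inv_le_log_of_pos h1r]

lemma growth_bound_sub_eq {α r : ℝ} (hα : 1 + α ≠ 0) (hr : 1 - r ≠ 0) (hαr : 1 + α * r ≠ 0) :
    r * (α + r) / ((1 + α * r) * (1 - r) ^ 2)
      - (((1 - α) / (1 + α)) ^ 2 * (α * r + r / (1 - r)) + r / (1 - r) ^ 2
        - ((1 - α) / (1 + α)) * (2 * r / (1 - r)))
      = α * r ^ 2 * (1 - α) * (2 * (1 + α) - α * (1 - α) * (1 - r))
        / ((1 - r) * (1 + α) ^ 2 * (1 + α * r)) := by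
  rw [div_sub' (by positivity), div_eq_div_iff (by positivity) (by positivity)]
  field_simp
  ring

lemma rational_bound_le_growth_bound {α r : ℝ} (hα₀ : 0 ≤ α) (hα₁ : α ≤ 1) (hr₀ : 0 ≤ r)
    (hr₁ : r < 1) :
    ((1 - α) / (1 + α)) ^ 2 * (α * r + r / (1 - r)) + r / (1 - r) ^ 2
        - ((1 - α) / (1 + α)) * (2 * r / (1 - r))
      ≤ r * (α + r) / ((1 + α * r) * (1 - r) ^ 2) := by
  have h1r : 0 < 1 - r := by linarith
  have h1α : 0 < 1 + α := by linarith
  have h1αr : 0 < 1 + α * r := by positivity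
  -- `α (1 - α) ≤ 1/4` keeps the last factor of the numerator positive
  have hfactor : 0 ≤ 2 * (1 + α) - α * (1 - α) * (1 - r) := by nlinarith
  have h1α' : 0 ≤ 1 - α := by linarith
  have hdiff := growth_bound_sub_eq h1α.ne' h1r.ne' h1αr.ne'
  have : 0 ≤ α * r ^ 2 * (1 - α) * (2 * (1 + α) - α * (1 - α) * (1 - r))
      / ((1 - r) * (1 + α) ^ 2 * (1 + α * r)) := by positivity
  linarith

theorem stmt14 (α r : ℝ) (hα : α ∈ Set.Ico (0:ℝ) 1) (hr : r ∈ Set.Ico (0:ℝ) 1) :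
    ((1 - α) / (1 + α)) ^ 2 * Real.log ((1 + α * r) / (1 - r)) + r / (1 - r) ^ 2
        - ((1 - α) / (1 + α)) * (2 * r / (1 - r))
      ≤ r * (α + r) / ((1 + α * r) * (1 - r) ^ 2) := by
  obtain ⟨hα₀, hα₁⟩ := hα
  obtain ⟨hr₀, hr₁⟩ := hr
  have hlog : log ((1 + α * r) / (1 - r)) ≤ α * r + r / (1 - r) := by
    simpa using log_div_one_sub_le (a := 1 + α * r) (by positivity) hr₁
  have := mul_le_mul_of_nonneg_left hlog (sq_nonneg ((1 - α) / (1 + α)))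
  linarith [rational_bound_le_growth_bound hα₀ hα₁.le hr₀ hr₁]
end
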